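/- arXiv:1702.08295 — 7 statements merged into one kernel-verified Lean document; each statement's English description precedes it below -/
import Mathlib

section
/- Let $d : \mathbb{N} \times \mathbb{N} \to \mathbb{R}$. Then $d$ satisfies the recurrence $d_{l,m} + d_{l+1,m+2} + d_{l+2,m+1} = d_{l+2,m+2} + d_{l,m+1} + d_{l+1,m}$ for all $l, m \geq 0$ if and only if there exists a function $k : \mathbb{Z} \to \mathbb{R}$ such that $d_{l+1,m+1} - d_{l,m+1} - d_{l+1,m} + d_{l,m} = k(l - m)$ for all $l, m \geq 0$. -/
/-!
The recurrence says precisely that the mixed second difference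
`Δd(l, m) = d(l+1, m+1) - d(l, m+1) - d(l+1, m) + d(l, m)` is invariant under the diagonal shift
`(l, m) ↦ (l+1, m+1)`, and a function on `ℕ × ℕ` is invariant under that shift exactly when it
factors through `(l, m) ↦ l - m ∈ ℤ`, each orbit of the shift containing a point on an axis.
-/

section DiagonalShift

variable {α : Type*} {f : ℕ → ℕ → α}

theorem apply_add_add_eq_of_diagonal_invariant (hf : ∀ l m, f (l + 1) (m + 1) = f l m)
    (l m j : ℕ) : f (l + j) (m + j) = f l m := by
  induction j with
  | zero => rfl
  | succ j ih => exact (hf _ _).trans ih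

theorem diagonal_invariant_iff_exists_comp_sub :
    (∀ l m, f (l + 1) (m + 1) = f l m) ↔ ∃ k : ℤ → α, ∀ l m : ℕ, f l m = k ((l : ℤ) - m) := by
  constructor
  · intro hf
    refine ⟨fun n => f n.toNat (-n).toNat, fun l m => ?_⟩
    have hl : ((l : ℤ) - m).toNat = l - min l m := by omega
    have hm : (-((l : ℤ) - m)).toNat = m - min l m := by omega
    have h := apply_add_add_eq_of_diagonal_invariant hf (l - min l m) (m - min l m) (min l m)
    rwa [Nat.sub_add_cancel (min_le_left l m), Nat.sub_add_cancel (min_le_right l m), ← hl, ← hm]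
      at h
  · rintro ⟨k, hk⟩ l m
    rw [hk, hk]
    push_cast
    congr 1
    ring

end DiagonalShift

section MixedDifference

variable {G : Type*} [AddCommGroup G]

def mixedDiff (d : ℕ × ℕ → G) (l m : ℕ) : G :=
  d (l + 1, m + 1) - d (l, m + 1) - d (l + 1, m) + d (l, m)

theorem degree_recurrence_iff_mixedDiff_eq (d : ℕ × ℕ → G) (l m : ℕ) :
    d (l, m) + d (l + 1, m + 2) + d (l + 2, m + 1) = d (l + 2, m + 2) + d (l, m + 1) + d (l + 1, m)
      ↔ mixedDiff d (l + 1) (m + 1) = mixedDiff d l m := by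
  rw [← sub_eq_zero, ← sub_eq_zero (a := mixedDiff d _ _), ← neg_eq_zero]
  unfold mixedDiff
  apply Eq.congr_left
  abel

end MixedDifference

/-- Proposition 1(i): the universal degree recurrence is equivalent to the mixed
second difference depending only on `l - m`. -/
theorem stmt_0 (d : ℕ × ℕ → ℝ) :
    (∀ l m : ℕ, d (l, m) + d (l + 1, m + 2) + d (l + 2, m + 1) =
        d (l + 2, m + 2) + d (l, m + 1) + d (l + 1, m)) ↔
    (∃ k : ℤ → ℝ, ∀ l m : ℕ,
        d (l + 1, m + 1) - d (l, m + 1) - d (l + 1, m) + d (l, m) = k ((l : ℤ) - (m : ℤ))) := by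
  simp only [degree_recurrence_iff_mixedDiff_eq]
  exact diagonal_invariant_iff_exists_comp_sub
end

section
/- Let $l_0 \geq 1$, $m_0 \geq 0$ be natural numbers and let $d : \mathbb{N} \times \mathbb{N} \to \mathbb{R}$ satisfy the homogeneous relation $(ii)H$: $d_{l+1,m+1} - d_{l,m} - d_{l,m+1} + d_{l-1,m} = 0$ for all $l \geq l_0$ and $m \geq m_0$. Then for all $k \geq 1$ and $j \geq 0$ one has $d_{l_0-1+j+k,\,m_0+j} - d_{l_0-2+j+k,\,m_0+j} = d_{l_0-1+k,\,m_0} - d_{l_0-2+k,\,m_0}$. -/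
/-! The relation `(ii)H` says exactly that the horizontal difference `d (l+1, m+1) - d (l, m+1)`
equals `d (l, m) - d (l-1, m)`, i.e. horizontal differences are constant along diagonals;
induction along the diagonal gives the identity. -/

theorem horizontal_sub_diagonal_shift_eq {G : Type*} [AddCommGroup G] {l₀ m₀ : ℕ}
    {d : ℕ × ℕ → G}
    (h : ∀ l m : ℕ, l₀ ≤ l → m₀ ≤ m →
      d (l + 1, m + 1) - d (l, m) - d (l, m + 1) + d (l - 1, m) = 0)
    {l m : ℕ} (hl : l₀ ≤ l) (hm : m₀ ≤ m) (j : ℕ) :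
    d (l + j, m + j) - d (l + j - 1, m + j) = d (l, m) - d (l - 1, m) := by
  induction j with
  | zero => rfl
  | succ j ih =>
    have hrel := h (l + j) (m + j) (by omega) (by omega)
    calc d (l + (j + 1), m + (j + 1)) - d (l + (j + 1) - 1, m + (j + 1))
        = (d (l + j + 1, m + j + 1) - d (l + j, m + j) - d (l + j, m + j + 1)
              + d (l + j - 1, m + j)) + (d (l + j, m + j) - d (l + j - 1, m + j)) := by
          rw [← add_assoc, ← add_assoc, Nat.add_sub_cancel]
          abel
      _ = d (l, m) - d (l - 1, m) := by rw [hrel, zero_add, ih]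

theorem stmt_5_general (l₀ m₀ : ℕ) (d : ℕ × ℕ → ℝ)
    (h : ∀ l m : ℕ, l₀ ≤ l → m₀ ≤ m →
      d (l + 1, m + 1) - d (l, m) - d (l, m + 1) + d (l - 1, m) = 0) :
    ∀ k j : ℕ, 1 ≤ k →
      d (l₀ + j + k - 1, m₀ + j) - d (l₀ + j + k - 2, m₀ + j) =
        d (l₀ + k - 1, m₀) - d (l₀ + k - 2, m₀) := by
  intro k j hk
  have shifted := horizontal_sub_diagonal_shift_eq h (l := l₀ + k - 1) (by omega) le_rfl j
  have e₁ : l₀ + j + k - 1 = l₀ + k - 1 + j := by omega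
  have e₂ : l₀ + j + k - 2 = l₀ + k - 1 + j - 1 := by omega
  have e₃ : l₀ + k - 2 = l₀ + k - 1 - 1 := by omega
  rwa [e₁, e₂, e₃]

/-- Main identity in the proof of Theorem 1, part 2: under the homogeneous relation
`(ii)H`, the horizontal first difference along row `m₀ + j`, shifted by `j`,
equals the horizontal first difference along row `m₀`. -/
theorem stmt_5 (l₀ m₀ : ℕ) (hl₀ : 1 ≤ l₀) (d : ℕ × ℕ → ℝ)
    (h : ∀ l m : ℕ, l₀ ≤ l → m₀ ≤ m →
      d (l + 1, m + 1) - d (l, m) - d (l, m + 1) + d (l - 1, m) = 0) :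
    ∀ k j : ℕ, 1 ≤ k →
      d (l₀ + j + k - 1, m₀ + j) - d (l₀ + j + k - 2, m₀ + j) =
        d (l₀ + k - 1, m₀) - d (l₀ + k - 2, m₀) :=
  stmt_5_general l₀ m₀ d h
end

section
/- Let $l_0 \geq 1$, $m_0 \geq 0$ be natural numbers and let $d : \mathbb{N} \times \mathbb{N} \to \mathbb{R}$ satisfy the homogeneous relation $(ii)H$: $d_{l+1,m+1} - d_{l,m} - d_{l,m+1} + d_{l-1,m} = 0$ for all $l \geq l_0$ and $m \geq m_0$. Then for all $j \geq 1$ and $k \geq 0$ one has $d_{l_0-1+j+k,\,m_0+j} = d_{l_0-1+k,\,m_0} - d_{l_0-1,m_0} + \sum_{i=1}^{j-1}\big(d_{l_0,m_0+i} - d_{l_0-1,m_0+i}\big) + d_{l_0,m_0+j}$. In particular, for each fixed $j$, the sequence $l \mapsto d_{l,m_0+j}$ grows linearly in the horizontal direction whenever $l \mapsto d_{l,m_0}$ is a linear function of $l$. -/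
/-!
Rewritten as `d (l + 1, m + 1) - d (l, m) = d (l, m + 1) - d (l - 1, m)`, relation (ii)H says that the
diagonal increment `d (l + 1, m + 1) - d (l, m)` does not depend on `l ≥ l₀ - 1`. Walking from row
`m₀` up a diagonal therefore adds the same increments as walking up the diagonal starting at the
left edge `l₀ - 1`, namely `d (l₀, m + 1) - d (l₀ - 1, m)`; summing them gives the explicit formula,
and a row that is affine in `l` stays affine with the same slope.
-/

open Finset

theorem Finset.sum_range_succ_sub_shift {G : Type*} [AddCommGroup G] (f g : ℕ → G) (n : ℕ) :
    ∑ i ∈ range (n + 1), (f (i + 1) - g i) = -g 0 + ∑ i ∈ Icc 1 n, (f i - g i) + f (n + 1) := by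
  induction n with
  | zero => simp [sub_eq_neg_add]
  | succ n ih =>
    rw [sum_range_succ, ih, sum_Icc_succ_top (by omega)]
    abel

section DiagonalRelation

variable {G : Type*} [AddCommGroup G] {e : ℕ → ℕ → G}
  (he : ∀ n q, e (n + 2) (q + 1) - e (n + 1) q = e (n + 1) (q + 1) - e n q)
include he

theorem diag_sub_eq_edge (n q : ℕ) : e (n + 1) (q + 1) - e n q = e 1 (q + 1) - e 0 q := by
  induction n with
  | zero => rfl
  | succ n ih => rw [he, ih]

theorem diag_eq_add_sum (p q : ℕ) :
    e (p + q) q = e p 0 + ∑ i ∈ range q, (e 1 (i + 1) - e 0 i) := by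
  induction q with
  | zero => simp
  | succ q ih =>
    rw [sum_range_succ, ← add_assoc (e p 0), ← ih, ← diag_sub_eq_edge he (p + q) q]
    abel

theorem diag_eq_explicit (k j : ℕ) (hj : 1 ≤ j) :
    e (k + j) j = e k 0 - e 0 0 + ∑ i ∈ Icc 1 (j - 1), (e 1 i - e 0 i) + e 1 j := by
  obtain ⟨n, rfl⟩ : ∃ n, j = n + 1 := ⟨j - 1, by omega⟩
  rw [diag_eq_add_sum he, sum_range_succ_sub_shift, Nat.add_sub_cancel]
  abel

end DiagonalRelation

/-- Explicit formula in the proof of Theorem 1, part 2, and the resulting linear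
growth along each horizontal row when the boundary row is linear. -/
theorem stmt_6 (l₀ m₀ : ℕ) (hl₀ : 1 ≤ l₀) (d : ℕ × ℕ → ℝ)
    (h : ∀ l m : ℕ, l₀ ≤ l → m₀ ≤ m →
      d (l + 1, m + 1) - d (l, m) - d (l, m + 1) + d (l - 1, m) = 0) :
    (∀ j k : ℕ, 1 ≤ j →
      d (l₀ + j + k - 1, m₀ + j) =
        d (l₀ + k - 1, m₀) - d (l₀ - 1, m₀) +
          (∑ i ∈ Finset.Icc 1 (j - 1), (d (l₀, m₀ + i) - d (l₀ - 1, m₀ + i))) +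
          d (l₀, m₀ + j)) ∧
    (∀ j : ℕ, 1 ≤ j → ∀ a b : ℝ,
      (∀ l : ℕ, l₀ - 1 ≤ l → d (l, m₀) = a + b * l) →
      ∃ c : ℝ, ∀ l : ℕ, l₀ + j - 1 ≤ l → d (l, m₀ + j) = c + b * l) := by
  obtain ⟨L, rfl⟩ : ∃ L, l₀ = L + 1 := ⟨l₀ - 1, by omega⟩
  set e : ℕ → ℕ → ℝ := fun p q ↦ d (L + p, m₀ + q) with he_def
  have he : ∀ n q, e (n + 2) (q + 1) - e (n + 1) q = e (n + 1) (q + 1) - e n q := by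
    intro n q
    have := h (L + n + 1) (m₀ + q) (by omega) (by omega)
    simp only [he_def, Nat.add_sub_cancel] at this ⊢
    ring_nf at this ⊢
    linear_combination this
  refine ⟨fun j k hj ↦ ?_, fun j _ a b hlin ↦ ?_⟩
  · rw [show L + 1 + j + k - 1 = L + (k + j) by omega, show L + 1 + k - 1 = L + k by omega,
      Nat.add_sub_cancel]
    exact diag_eq_explicit he k j hj
  · refine ⟨a - b * j + ∑ i ∈ range j, (e 1 (i + 1) - e 0 i), fun l hl ↦ ?_⟩
    obtain ⟨p, rfl⟩ : ∃ p, l = L + (p + j) := ⟨l - L - j, by omega⟩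
    have hrow := hlin (L + p) (by omega)
    change e (p + j) j = _
    rw [diag_eq_add_sum he, show e p 0 = d (L + p, m₀) from rfl, hrow]
    push_cast
    ring
end

section
/- Let $p, q \geq 1$ be coprime natural numbers and let $d : \mathbb{N} \to \mathbb{R}$ satisfy the linear recurrence $d_{n+p+q} - d_{n+p} - d_{n+q} + d_n = 0$ for all $n \geq 0$. Then $d$ grows at most linearly: there exist real constants $c$ and $C$ such that $|d_n - c\,n| \leq C$ for all $n$. -/
/-!
Write `Δₐ d n = d (n + a) - d n`. For all `a`, `b`, `Δ_b d` has period `a` iff `Δ_a d` has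
period `b`: both say `d (n + a + b) - d (n + a) - d (n + b) + d n = 0`, and the recurrence is the
case `a = p`, `b = q`. So `Δ_p d` and `Δ_q d` have period `pq`, and by the same symmetry `Δ_{pq} d`
has periods `p` and `q`, hence period `gcd p q = 1`: it is a constant `S`. Then
`d n - (S / pq) n` has period `pq`, so it takes finitely many values.
-/

open Function

theorem Function.Periodic.nat_mod {α : Type*} {f : ℕ → α} {m n : ℕ} (hm : Periodic f m)
    (hn : Periodic f n) : Periodic f (m % n) := fun x => by
  rw [← hn.nsmul (m / n) (x + m % n), smul_eq_mul, add_assoc, Nat.mod_add_div', hm]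

theorem Function.Periodic.nat_gcd {α : Type*} {f : ℕ → α} {m n : ℕ} (hm : Periodic f m)
    (hn : Periodic f n) : Periodic f (m.gcd n) := by
  revert hm hn
  refine Nat.gcd.induction m n (fun n _ hn => ?_) fun m n _ ih hm hn => ?_
  · rwa [Nat.gcd_zero_left]
  · rw [Nat.gcd_rec]
    exact ih (hn.nat_mod hm) hm

theorem Function.Periodic.finite_range_nat {α : Type*} {f : ℕ → α} {a : ℕ} (hf : Periodic f a)
    (ha : 0 < a) : (Set.range f).Finite := by
  refine ((Set.finite_Iio a).image f).subset ?_
  rintro _ ⟨n, rfl⟩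
  exact ⟨n % a, Nat.mod_lt n ha, hf.map_mod_nat n⟩

section Differences

variable {α G : Type*} [AddCommSemigroup α] [AddCommGroup G] {d : α → G}

theorem periodic_sub_shift_swap {a b : α}
    (h : Periodic (fun x => d (x + b) - d x) a) : Periodic (fun x => d (x + a) - d x) b := by
  intro x
  have hx := h x
  simp only [add_right_comm x b a] at hx ⊢
  exact sub_eq_sub_iff_sub_eq_sub.mp hx

end Differences

theorem exists_abs_sub_mul_le_of_add_eq {d : ℕ → ℝ} {N : ℕ} {S : ℝ} (hN : 0 < N)
    (hd : ∀ n, d (n + N) - d n = S) : ∃ C, ∀ n : ℕ, |d n - S / N * n| ≤ C := by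
  have hper : Periodic (fun n : ℕ => d n - S / N * n) N := fun n => by
    have hN' : (N : ℝ) ≠ 0 := by positivity
    have := hd n
    push_cast
    field_simp
    linear_combination (N : ℝ) * this
  obtain ⟨C, hC⟩ := isBounded_iff_forall_norm_le.mp (hper.finite_range_nat hN).isBounded
  exact ⟨C, fun n => hC _ ⟨n, rfl⟩⟩

/-- Corollary to Theorem 1, `(q,-p)` reduction of `(i)H`: any solution of
`d (n+p+q) - d (n+p) - d (n+q) + d n = 0` with `p`, `q` coprime grows at most
linearly. -/
theorem stmt_8 (p q : ℕ) (hp : 1 ≤ p) (hq : 1 ≤ q) (hpq : Nat.Coprime p q)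
    (d : ℕ → ℝ)
    (h : ∀ n : ℕ, d (n + p + q) - d (n + p) - d (n + q) + d n = 0) :
    ∃ c C : ℝ, ∀ n : ℕ, |d n - c * n| ≤ C := by
  have hq_diff : Periodic (fun n => d (n + q) - d n) p := fun n => by
    linear_combination h n
  have hp_diff : Periodic (fun n => d (n + p) - d n) q := periodic_sub_shift_swap hq_diff
  have hN_q : Periodic (fun n => d (n + p * q) - d n) q :=
    periodic_sub_shift_swap (mul_comm q p ▸ hq_diff.nat_mul q)
  have hN_p : Periodic (fun n => d (n + p * q) - d n) p :=
    periodic_sub_shift_swap (hp_diff.nat_mul p)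
  have hN_one : Periodic (fun n => d (n + p * q) - d n) 1 := hpq ▸ hN_p.nat_gcd hN_q
  obtain ⟨C, hC⟩ := exists_abs_sub_mul_le_of_add_eq (S := d (p * q) - d 0)
    (Nat.mul_pos hp hq) fun n => by simpa using hN_one.nat_mul_eq n
  exact ⟨_, C, hC⟩
end

section
/- Let $p, q \geq 1$ be coprime natural numbers and let $d : \mathbb{N} \to \mathbb{R}$ satisfy the linear recurrence $d_{n+2p+q} - d_{n+p+q} - d_{n+p} + d_n = 0$ for all $n \geq 0$. Then $d$ grows at most linearly: there exist real constants $c$ and $C$ such that $|d_n - c\,n| \leq C$ for all $n$. -/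
/-- Corollary to Theorem 1, `(q,-p)` reduction of `(ii)H`: any solution of
`d (n+2p+q) - d (n+p+q) - d (n+p) + d n = 0` with `p`, `q` coprime grows at most
linearly. -/
theorem stmt_9 (p q : ℕ) (hp : 1 ≤ p) (hq : 1 ≤ q) (hpq : Nat.Coprime p q)
    (d : ℕ → ℝ)
    (h : ∀ n : ℕ, d (n + 2 * p + q) - d (n + p + q) - d (n + p) + d n = 0) :
    ∃ c C : ℝ, ∀ n : ℕ, |d n - c * n| ≤ C := by
  set P := p * (p + q) with hPdef
  have hPpos : 0 < P := Nat.mul_pos hp (by omega)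
  -- e n := d (n+p) - d n is periodic with period p+q
  have he : ∀ n, d (n + (p + q) + p) - d (n + (p + q)) = d (n + p) - d n := by
    intro n
    have h1 := h n
    have e1 : n + (p + q) + p = n + 2 * p + q := by ring
    have e2 : n + (p + q) = n + p + q := by ring
    rw [e1, e2]; linarith
  -- f n := d (n+(p+q)) - d n is periodic with period p
  have hf : ∀ n, d (n + p + (p + q)) - d (n + p) = d (n + (p + q)) - d n := by
    intro n
    have h1 := h n
    have e1 : n + p + (p + q) = n + 2 * p + q := by ring
    have e2 : n + (p + q) = n + p + q := by ring
    rw [e1, e2]; linarith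
  -- iterated versions
  have heK : ∀ k n, d (n + k * (p + q) + p) - d (n + k * (p + q)) = d (n + p) - d n := by
    intro k
    induction k with
    | zero => intro n; simp
    | succ k ih =>
      intro n
      have e1 : n + (k + 1) * (p + q) = n + k * (p + q) + (p + q) := by ring
      rw [e1]
      rw [he (n + k * (p + q))]
      exact ih n
  have hfK : ∀ k n, d (n + k * p + (p + q)) - d (n + k * p) = d (n + (p + q)) - d n := by
    intro k
    induction k with
    | zero => intro n; simp
    | succ k ih =>
      intro n
      have e1 : n + (k + 1) * p = n + k * p + p := by ring
      rw [e1]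
      rw [hf (n + k * p)]
      exact ih n
  -- g n := d (n + P) - d n
  set g : ℕ → ℝ := fun n => d (n + P) - d n with hgdef
  have hg_p : ∀ n, g (n + p) = g n := by
    intro n
    have h1 := heK p n
    have e1 : n + p * (p + q) + p = n + p + P := by rw [hPdef]; ring
    rw [e1] at h1
    simp only [hgdef]
    linarith [h1]
  have hg_pq : ∀ n, g (n + (p + q)) = g n := by
    intro n
    have h1 := hfK (p + q) n
    have e1 : n + (p + q) * p + (p + q) = n + (p + q) + P := by rw [hPdef]; ring
    have e2 : n + (p + q) * p = n + P := by rw [hPdef]; ring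
    rw [e1, e2] at h1
    simp only [hgdef]
    linarith [h1]
  have hg_q : ∀ n, g (n + q) = g n := by
    intro n
    have h1 := hg_p (n + q)
    have h2 := hg_pq n
    have e1 : n + q + p = n + (p + q) := by ring
    rw [e1] at h1
    rw [← h1, h2]
  have hg_pK : ∀ k n, g (n + k * p) = g n := by
    intro k
    induction k with
    | zero => intro n; simp
    | succ k ih =>
      intro n
      have e1 : n + (k + 1) * p = n + k * p + p := by ring
      rw [e1, hg_p, ih]
  have hg_qK : ∀ k n, g (n + k * q) = g n := by
    intro k
    induction k with
    | zero => intro n; simp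
    | succ k ih =>
      intro n
      have e1 : n + (k + 1) * q = n + k * q + q := by ring
      rw [e1, hg_q, ih]
  -- Bezout: ∃ a b, a * p = b * q + 1
  obtain ⟨a, b, hab⟩ : ∃ a b : ℕ, a * p = b * q + 1 := by
    rcases eq_or_lt_of_le hq with h1 | h1
    · exact ⟨1, p - 1, by rw [← h1]; omega⟩
    · obtain ⟨m, -, hm⟩ := Nat.exists_mul_mod_eq_one_of_coprime hpq h1
      set t := p * m / q with ht
      have h2 := Nat.div_add_mod (p * m) q
      rw [hm] at h2
      exact ⟨m, t, by rw [mul_comm m p, mul_comm t q]; exact h2.symm⟩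
  have hg1 : ∀ n, g (n + 1) = g n := by
    intro n
    have h1 := hg_qK b (n + 1)
    have h2 := hg_pK a n
    have e1 : n + 1 + b * q = n + a * p := by omega
    rw [e1] at h1
    rw [← h1, h2]
  have hg_const : ∀ n, g n = g 0 := by
    intro n
    induction n with
    | zero => rfl
    | succ n ih => rw [hg1 n]; exact ih
  set S : ℝ := g 0 with hSdef
  set c : ℝ := S / P with hcdef
  have hPne : (P : ℝ) ≠ 0 := by positivity
  have hcP : c * P = S := by rw [hcdef]; field_simp
  have step : ∀ n, d (n + P) = d n + S := by
    intro n
    have := hg_const n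
    simp only [hgdef] at this
    linarith
  have mult : ∀ k r : ℕ, d (r + k * P) - c * (r + k * P : ℕ) = d r - c * r := by
    intro k
    induction k with
    | zero => intro r; simp
    | succ k ih =>
      intro r
      have e1 : r + (k + 1) * P = r + k * P + P := by ring
      rw [e1, step (r + k * P)]
      have := ih r
      push_cast at this ⊢
      linarith
  refine ⟨c, ∑ i ∈ Finset.range P, |d i - c * i|, fun n => ?_⟩
  have hmod : n % P + (n / P) * P = n := by
    rw [Nat.mul_comm]; exact Nat.mod_add_div n P
  have key : d n - c * n = d (n % P) - c * (n % P : ℕ) := by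
    conv_lhs => rw [← hmod]
    exact mult (n / P) (n % P)
  rw [key]
  have hrmem : n % P ∈ Finset.range P := Finset.mem_range.mpr (Nat.mod_lt n hPpos)
  exact Finset.single_le_sum (f := fun i => |d i - c * i|)
    (fun i _ => abs_nonneg _) hrmem
end

section
/- Let $p, q \geq 1$ be coprime natural numbers and let $d : \mathbb{N} \to \mathbb{R}$ satisfy the linear recurrence $d_{n+p+2q} - d_{n+p+q} - d_{n+q} + d_n = 0$ for all $n \geq 0$. Then $d$ grows at most linearly: there exist real constants $c$ and $C$ such that $|d_n - c\,n| \leq C$ for all $n$. -/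
/-- Corollary to Theorem 1, `(q,-p)` reduction of `(iii)H`: any solution of
`d (n+p+2q) - d (n+p+q) - d (n+q) + d n = 0` with `p`, `q` coprime grows at most
linearly. -/
theorem stmt_10 (p q : ℕ) (hp : 1 ≤ p) (hq : 1 ≤ q) (hpq : Nat.Coprime p q)
    (d : ℕ → ℝ)
    (h : ∀ n : ℕ, d (n + p + 2 * q) - d (n + p + q) - d (n + q) + d n = 0) :
    ∃ c C : ℝ, ∀ n : ℕ, |d n - c * n| ≤ C := by
  set e : ℕ → ℝ := fun m => d (m + q) - d m with he
  -- e is periodic with period p + q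
  have hep : ∀ n, e (n + (p + q)) = e n := by
    intro n
    have h1 : n + (p + q) + q = n + p + 2 * q := by ring
    have h2 : n + (p + q) = n + p + q := by ring
    have := h n
    simp only [he]
    rw [h1, h2]
    linarith
  have hep' : ∀ t n, e (n + t * (p + q)) = e n := by
    intro t
    induction t with
    | zero => simp
    | succ k ih =>
      intro n
      have h1 : n + (k + 1) * (p + q) = (n + k * (p + q)) + (p + q) := by ring
      rw [h1, hep, ih]
  -- telescoping sum
  have hsum : ∀ K n, d (n + K * q) = d n + ∑ k ∈ Finset.range K, e (n + k * q) := by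
    intro K
    induction K with
    | zero => simp
    | succ k ih =>
      intro n
      have h1 : n + (k + 1) * q = (n + k * q) + q := by ring
      rw [h1, Finset.sum_range_succ]
      have := ih n
      simp only [he]
      linarith
  set N : ℕ := q * (p + q) with hN
  set g : ℕ → ℝ := fun n => d (n + N) - d n with hg
  have hgsum : ∀ n, g n = ∑ k ∈ Finset.range (p + q), e (n + k * q) := by
    intro n
    have h1 : n + N = n + (p + q) * q := by rw [hN]; ring
    simp only [hg, h1, hsum (p + q) n]
    ring
  -- g has period q
  have hgq : ∀ n, g (n + q) = g n := by
    intro n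
    have h1 : n + q + N = (n + N) + q := by ring
    have h2 : n + N = n + q * (p + q) := by rw [hN]
    simp only [hg, h1]
    have := hep' q n
    rw [← h2] at this
    simp only [he] at this
    linarith
  have hgq' : ∀ t n, g (n + t * q) = g n := by
    intro t
    induction t with
    | zero => simp
    | succ k ih =>
      intro n
      have h1 : n + (k + 1) * q = (n + k * q) + q := by ring
      rw [h1, hgq, ih]
  -- g has period p + q
  have hgpq : ∀ n, g (n + (p + q)) = g n := by
    intro n
    rw [hgsum, hgsum]
    apply Finset.sum_congr rfl
    intro k _
    have h1 : n + (p + q) + k * q = (n + k * q) + (p + q) := by ring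
    rw [h1, hep]
  have hgpq' : ∀ t n, g (n + t * (p + q)) = g n := by
    intro t
    induction t with
    | zero => simp
    | succ k ih =>
      intro n
      have h1 : n + (k + 1) * (p + q) = (n + k * (p + q)) + (p + q) := by ring
      rw [h1, hgpq, ih]
  -- coprimality: q * m ≡ 1 mod (p + q)
  have hco : Nat.Coprime q (p + q) := by
    have := (Nat.coprime_add_self_right (m := q) (n := p)).mpr hpq.symm
    exact this
  have hlt : 1 < p + q := by omega
  obtain ⟨m, -, hm⟩ := Nat.exists_mul_mod_eq_one_of_coprime hco hlt
  have hbez : q * m = (p + q) * (q * m / (p + q)) + 1 := by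
    have := Nat.div_add_mod (q * m) (p + q)
    omega
  -- g is 1-periodic hence constant
  have hg1 : ∀ n, g (n + 1) = g n := by
    intro n
    have h1 : n + m * q = (n + 1) + (q * m / (p + q)) * (p + q) := by
      have e1 : m * q = q * m := Nat.mul_comm m q
      have e2 : (q * m / (p + q)) * (p + q) = (p + q) * (q * m / (p + q)) :=
        Nat.mul_comm _ _
      omega
    calc g (n + 1) = g ((n + 1) + (q * m / (p + q)) * (p + q)) := (hgpq' _ _).symm
    _ = g (n + m * q) := by rw [h1]
    _ = g n := hgq' m n
  have hgconst : ∀ n, g n = g 0 := by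
    intro n
    induction n with
    | zero => rfl
    | succ k ih => rw [hg1 k, ih]
  set S : ℝ := g 0 with hS
  have hper : ∀ n, d (n + N) = d n + S := by
    intro n
    have := hgconst n
    simp only [hg] at this
    linarith
  have hNpos : 0 < N := by positivity
  refine ⟨S / N, ∑ i ∈ Finset.range N, |d i - S / N * i|, ?_⟩
  have hcN : S / N * N = S := by
    field_simp
  intro n
  induction n using Nat.strong_induction_on with
  | _ n ih =>
    by_cases hn : n < N
    · exact Finset.single_le_sum (f := fun i => |d i - S / N * i|)
        (fun i _ => abs_nonneg _) (Finset.mem_range.mpr hn)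
    · push_neg at hn
      have hm' : n - N < n := by omega
      have hrep : n = (n - N) + N := by omega
      have hdn : d n = d (n - N) + S := by
        have := hper (n - N); rwa [Nat.sub_add_cancel hn] at this
      have hcast : (n : ℝ) = ((n - N : ℕ) : ℝ) + (N : ℝ) := by
        rw [Nat.cast_sub hn]; ring
      have : d n - S / N * n = d (n - N) - S / N * ((n - N : ℕ) : ℝ) := by
        rw [hdn, hcast]; linarith [hcN]
      rw [this]
      exact ih (n - N) hm'
end

section
/- Let $s, t : \mathbb{N} \times \mathbb{N} \to \mathbb{R}$ be arbitrary functions and let $z : \mathbb{N} \times \mathbb{N} \to \mathbb{R}$ be nowhere vanishing and satisfy the linear lattice equation $s_{l,m} z_{l,m} - t_{l,m} z_{l+1,m} + z_{l,m+1} - z_{l+1,m+1} = 0$ for all $l, m \geq 0$. Define $u_{l,m} = z_{l,m+1} / z_{l,m}$ (the Cole–Hopf transformation). Then $u$ satisfies the quad-graph equation $u_{l,m}\,(u_{l,m+1} + s_{l,m+1})\,(u_{l+1,m} + t_{l,m}) = u_{l+1,m}\,(u_{l,m} + s_{l,m})\,(u_{l+1,m+1} + t_{l,m+1})$ for all $l,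 m \geq 0$. -/
/-!
Under the Cole–Hopf transform the linear equation says that
`(u + s) z = z₂ + s z = z₁₂ + t z₁ = (u₁ + t) z₁`. Writing `u = z₂ / z`, `u₁ = z₁₂ / z₁` and using
this identity at `m` and at `m + 1`, both sides of the quad-graph equation, multiplied by
`z z₁`, become `(z₁₂ + t z₁)(z₁₂₂ + t₂ z₁₂)`.
-/

section ColeHopf

variable {K : Type*} [Field K] {s t z u : ℕ × ℕ → K}

theorem coleHopf_mul_eq (hz : ∀ l m : ℕ, z (l, m) ≠ 0)
    (hu : ∀ l m : ℕ, u (l, m) = z (l, m + 1) / z (l, m)) (l m : ℕ) :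
    u (l, m) * z (l, m) = z (l, m + 1) := by
  rw [hu, div_mul_cancel₀ _ (hz l m)]

theorem coleHopf_add_mul_eq (hz : ∀ l m : ℕ, z (l, m) ≠ 0)
    (hlin : ∀ l m : ℕ,
      s (l, m) * z (l, m) - t (l, m) * z (l + 1, m) + z (l, m + 1) - z (l + 1, m + 1) = 0)
    (hu : ∀ l m : ℕ, u (l, m) = z (l, m + 1) / z (l, m)) (l m : ℕ) :
    (u (l, m) + s (l, m)) * z (l, m) = (u (l + 1, m) + t (l, m)) * z (l + 1, m) := by
  rw [add_mul, add_mul, coleHopf_mul_eq hz hu, coleHopf_mul_eq hz hu]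
  linear_combination hlin l m

theorem coleHopf_quadGraph (hz : ∀ l m : ℕ, z (l, m) ≠ 0)
    (hlin : ∀ l m : ℕ,
      s (l, m) * z (l, m) - t (l, m) * z (l + 1, m) + z (l, m + 1) - z (l + 1, m + 1) = 0)
    (hu : ∀ l m : ℕ, u (l, m) = z (l, m + 1) / z (l, m)) (l m : ℕ) :
    u (l, m) * (u (l, m + 1) + s (l, m + 1)) * (u (l + 1, m) + t (l, m)) =
      u (l + 1, m) * (u (l, m) + s (l, m)) * (u (l + 1, m + 1) + t (l, m + 1)) := by
  have h₀ := coleHopf_add_mul_eq hz hlin hu l m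
  have h₂ := coleHopf_add_mul_eq hz hlin hu l (m + 1)
  have hv₀ := coleHopf_mul_eq hz hu l m
  have hv₁ := coleHopf_mul_eq hz hu (l + 1) m
  refine mul_right_cancel₀ (mul_ne_zero (hz l m) (hz (l + 1) m)) ?_
  linear_combination
    ((u (l, m + 1) + s (l, m + 1)) * (u (l + 1, m) + t (l, m)) * z (l + 1, m)) * hv₀ +
      ((u (l + 1, m) + t (l, m)) * z (l + 1, m)) * h₂ -
      ((u (l + 1, m + 1) + t (l, m + 1)) * z (l + 1, m + 1)) * h₀ -
      ((u (l, m) + s (l, m)) * (u (l + 1, m + 1) + t (l, m + 1)) * z (l, m)) * hv₁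

end ColeHopf

/-- Linearization of the RJGT-type quad-graph equation: if `z` is a nowhere
vanishing solution of the linear lattice equation
`s z - t z₁ + z₂ - z₁₂ = 0`, then the Cole–Hopf transform `u (l,m) = z (l,m+1) / z (l,m)`
satisfies `u (u₂ + s₂)(u₁ + t) = u₁ (u + s)(u₁₂ + t₂)`. -/
theorem stmt_19 (s t z u : ℕ × ℕ → ℝ)
    (hz : ∀ l m : ℕ, z (l, m) ≠ 0)
    (hlin : ∀ l m : ℕ,
      s (l, m) * z (l, m) - t (l, m) * z (l + 1, m) + z (l, m + 1) - z (l + 1, m + 1) = 0)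
    (hu : ∀ l m : ℕ, u (l, m) = z (l, m + 1) / z (l, m)) :
    ∀ l m : ℕ,
      u (l, m) * (u (l, m + 1) + s (l, m + 1)) * (u (l + 1, m) + t (l, m)) =
        u (l + 1, m) * (u (l, m) + s (l, m)) * (u (l + 1, m + 1) + t (l, m + 1)) :=
  coleHopf_quadGraph hz hlin hu
end
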